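/- arXiv:2601.13085 — 3 statements merged into one kernel-verified Lean document; each statement's English description precedes it below -/
import Mathlib

section
/- For all integers m and n with 2 ≤ m and 2m ≤ n, there exist a digraph D on n vertices with exactly n − m arcs and a digraph D' on n vertices with exactly 2n − ⌊n/m⌋ arcs such that D and D' do not pack. (Consequently μ(n, n−m) ≤ 2n − ⌊n/m⌋.) -/
/-- A digraph on `Fin n` given by its finite arc set: arcs are ordered pairs
of distinct vertices (irreflexivity). -/
def IsDigraph {n : ℕ} (A : Finset (Fin n × Fin n)) : Prop :=
  ∀ p ∈ A, p.1 ≠ p.2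

/-- Two digraphs on `n` vertices pack if there is a bijection of the vertex
sets sending every arc of the first to a non-arc of the second. -/
def Packs {n : ℕ} (A A' : Finset (Fin n × Fin n)) : Prop :=
  ∃ f : Fin n ≃ Fin n, ∀ p ∈ A, (f p.1, f p.2) ∉ A'

/-!
Let `k = ⌊n/m⌋`. Take for `D` the functional digraph of `v ↦ v mod m`: a disjoint union of `m`
in-stars centred at `0, …, m-1`, each centre having at least `k - 1` in-neighbours. Take for `D'`
a vertex `z` with arcs to every other vertex and from all but `k - 2` of them. A packing `f` must
send to `z` a vertex of out-degree `0` in `D`, that is a star centre `w`, and must send the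
`≥ k - 1` in-neighbours of `w` to the `k - 2` vertices that are not in-neighbours of `z`.
-/

open Finset

section
variable {V : Type*} [Fintype V] [DecidableEq V]

def functionalArcs (c : V → V) : Finset (V × V) :=
  (univ.filter fun v => c v ≠ v).image fun v => (v, c v)

lemma mem_functionalArcs {c : V → V} {p : V × V} :
    p ∈ functionalArcs c ↔ c p.1 ≠ p.1 ∧ p.2 = c p.1 := by
  obtain ⟨v, u⟩ := p
  simp only [functionalArcs, mem_image, mem_filter, mem_univ, true_and, Prod.mk.injEq]
  constructor
  · rintro ⟨v, hv, rfl, rfl⟩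
    exact ⟨hv, rfl⟩
  · rintro ⟨hv, rfl⟩
    exact ⟨v, hv, rfl, rfl⟩

lemma card_functionalArcs (c : V → V) :
    #(functionalArcs c) = Fintype.card V - #{v | c v = v} := by
  rw [functionalArcs, card_image_of_injective _ fun _ _ => congrArg Prod.fst, filter_not,
    card_sdiff_of_subset (filter_subset _ _), card_univ]

lemma card_functionalArcs_filter_snd {c : V → V} {w : V} (hw : c w = w) :
    #{p ∈ functionalArcs c | p.2 = w} = #{v | c v = w} - 1 := by
  have : {p ∈ functionalArcs c | p.2 = w} =
      ((univ.filter fun v => c v = w).erase w).image fun v => (v, c v) := by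
    ext ⟨v, u⟩
    simp only [mem_filter, mem_functionalArcs, mem_image, mem_erase, mem_univ, true_and,
      Prod.mk.injEq]
    constructor
    · rintro ⟨⟨hv, rfl⟩, rfl⟩
      exact ⟨v, ⟨Ne.symm hv, rfl⟩, rfl, rfl⟩
    · rintro ⟨v, ⟨hvw, rfl⟩, rfl, rfl⟩
      exact ⟨⟨Ne.symm hvw, rfl⟩, rfl⟩
  rw [this, card_image_of_injective _ fun _ _ => congrArg Prod.fst,
    card_erase_of_mem (by simp [hw])]

lemma apply_eq_self_of_forall_notMem_functionalArcs {c : V → V} {w : V}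
    (hw : ∀ u, (w, u) ∉ functionalArcs c) : c w = w :=
  by_contra fun h => hw (c w) (mem_functionalArcs.2 ⟨h, rfl⟩)

def hubArcs (z : V) (S : Finset V) : Finset (V × V) :=
  (univ.erase z).image (Prod.mk z) ∪ S.image fun v => (v, z)

lemma mem_hubArcs {z : V} {S : Finset V} {p : V × V} :
    p ∈ hubArcs z S ↔ (p.1 = z ∧ p.2 ≠ z) ∨ (p.1 ∈ S ∧ p.2 = z) := by
  obtain ⟨v, u⟩ := p
  simp only [hubArcs, mem_union, mem_image, mem_erase, mem_univ, and_true, Prod.mk.injEq]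
  aesop

lemma card_hubArcs (z : V) (S : Finset V) :
    #(hubArcs z S) = Fintype.card V - 1 + #S := by
  have hdisj : Disjoint ((univ.erase z).image (Prod.mk z)) (S.image fun v => (v, z)) := by
    simp only [disjoint_left, mem_image, mem_erase]
    rintro _ ⟨u, ⟨hu, -⟩, rfl⟩ ⟨v, -, h⟩
    exact hu (Prod.ext_iff.1 h).2.symm
  rw [hubArcs, card_union_of_disjoint hdisj,
    card_image_of_injective _ (Prod.mk_right_injective z),
    card_image_of_injective _ (Prod.mk_left_injective z), card_erase_of_mem (mem_univ z),
    card_univ]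

end

def finMod {n : ℕ} (m : ℕ) (v : Fin n) : Fin n :=
  ⟨v % m, (Nat.mod_le _ _).trans_lt v.isLt⟩

lemma finMod_eq_self_iff {n m : ℕ} (hm : 0 < m) {v : Fin n} : finMod m v = v ↔ (v : ℕ) < m := by
  simp [finMod, Fin.ext_iff, Nat.mod_eq_iff_lt hm.ne']

lemma card_filter_finMod_eq {n m : ℕ} {w : Fin n} (hw : (w : ℕ) < m) :
    #{v | finMod m v = w} = Nat.count (· ≡ w [MOD m]) n := by
  rw [Nat.count_eq_card_filter_range, ← Nat.Iio_eq_range, ← Fin.map_valEmbedding_univ,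
    filter_map, card_map]
  congr 1
  ext v
  simp [finMod, Fin.ext_iff, Nat.ModEq, Nat.mod_eq_of_lt hw]

lemma isDigraph_functionalArcs {n : ℕ} (c : Fin n → Fin n) : IsDigraph (functionalArcs c) :=
  fun p hp => by
    obtain ⟨hne, hp2⟩ := mem_functionalArcs.1 hp
    exact hp2 ▸ hne.symm

lemma isDigraph_hubArcs {n : ℕ} {z : Fin n} {S : Finset (Fin n)} (hz : z ∉ S) :
    IsDigraph (hubArcs z S) := fun p hp => by
  rcases mem_hubArcs.1 hp with ⟨h1, h2⟩ | ⟨h1, h2⟩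
  · exact h1 ▸ h2.symm
  · exact fun h => hz (h2 ▸ h ▸ h1)

theorem not_packs_hubArcs {n : ℕ} {A : Finset (Fin n × Fin n)} (hA : IsDigraph A) {z : Fin n}
    {S : Finset (Fin n)} (hz : z ∉ S)
    (h : ∀ w, (∀ u, (w, u) ∉ A) → n - 1 - #S < #{p ∈ A | p.2 = w}) :
    ¬ Packs A (hubArcs z S) := by
  rintro ⟨f, hf⟩
  set w := f.symm z
  have hfw : f w = z := f.apply_symm_apply z
  have hne : ∀ v, v ≠ w → f v ≠ z := fun v hv hvz => hv (f.injective (hvz.trans hfw.symm))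
  have hsink : ∀ u, (w, u) ∉ A := fun u hu =>
    hf _ hu (mem_hubArcs.2 (Or.inl ⟨hfw, hne u (hA _ hu).symm⟩))
  have hmaps : ∀ p ∈ {p ∈ A | p.2 = w}, f p.1 ∈ (insert z S)ᶜ := by
    intro p hp
    obtain ⟨hpA, hpw⟩ := mem_filter.1 hp
    have hpz : f p.1 ≠ z := hne _ (hpw ▸ hA p hpA)
    have hpS : f p.1 ∉ S := fun hS => hf p hpA (mem_hubArcs.2 (Or.inr ⟨hS, hpw ▸ hfw⟩))
    simpa [hpz] using hpS
  have hle := card_le_card_of_injOn _ hmaps fun p hp q hq hpq =>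
    Prod.ext (f.injective hpq) ((mem_filter.1 hp).2.trans (mem_filter.1 hq).2.symm)
  rw [card_compl, card_insert_of_notMem hz, Fintype.card_fin] at hle
  have := h w hsink
  omega

/-- For `2 ≤ m ≤ n/2` there exist digraphs on `n` vertices with exactly
`n - m` and `2n - ⌊n/m⌋` arcs, respectively, that do not pack. -/
theorem exists_non_packing (m n : ℕ) (hm : 2 ≤ m) (hn : 2 * m ≤ n) :
    ∃ A A' : Finset (Fin n × Fin n),
      IsDigraph A ∧ IsDigraph A' ∧ A.card = n - m ∧
      A'.card = 2 * n - n / m ∧ ¬ Packs A A' := by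
  have hk : 2 ≤ n / m := (Nat.le_div_iff_mul_le (by omega)).2 hn
  have hkn : n / m - 1 < n := by have := Nat.div_le_self n m; omega
  set z : Fin n := ⟨0, by omega⟩
  set S : Finset (Fin n) := Ici ⟨n / m - 1, hkn⟩
  have hzS : z ∉ S := by simp [S, z, Fin.le_def]; omega
  have hS : #S = n - (n / m - 1) := Fin.card_Ici _
  refine ⟨functionalArcs (finMod m), hubArcs z S, isDigraph_functionalArcs _,
    isDigraph_hubArcs hzS, ?_, ?_, ?_⟩
  · simp_rw [card_functionalArcs, finMod_eq_self_iff (by omega : 0 < m),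
      Fin.card_filter_val_lt, Fintype.card_fin]
    omega
  · rw [card_hubArcs, hS, Fintype.card_fin]
    omega
  · refine not_packs_hubArcs (isDigraph_functionalArcs _) hzS fun w hw => ?_
    have hfix := apply_eq_self_of_forall_notMem_functionalArcs hw
    have hwm : (w : ℕ) < m := (finMod_eq_self_iff (by omega)).1 hfix
    rw [card_functionalArcs_filter_snd hfix, card_filter_finMod_eq hwm,
      Nat.count_modEq_card _ (by omega)]
    omega
end

section
/- Let D and D' be digraphs on n vertices and let q be a nonnegative integer. If |A(D)| · |A(D')| < (q+1) · n · (n−1), then there exists a q-near-packing of D and D', i.e., a bijection f from V(D) to V(D') such that the number of arcs uv of D for which f(u)f(v) is an arc of D' is at most q. -/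
lemma card_perm_two_point_le (n : ℕ) (u v a b : Fin n) (huv : u ≠ v) (hab : a ≠ b) :
    (Finset.univ.filter fun f : Equiv.Perm (Fin n) => f u = a ∧ f v = b).card ≤
      (n - 2).factorial := by
  rw [← Fintype.card_subtype]
  have hc1 : Fintype.card {x : Fin n // x ≠ u ∧ x ≠ v} = n - 2 := by
    rw [Fintype.card_subtype]
    have he : Finset.filter (fun x : Fin n => x ≠ u ∧ x ≠ v) Finset.univ
        = Finset.univ \ {u, v} := by
      ext x; simp [not_or, and_comm]
    rw [he, Finset.card_sdiff_of_subset (by simp)]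
    simp [Finset.card_insert_of_notMem, huv]
  have hc2 : Fintype.card {x : Fin n // x ≠ a ∧ x ≠ b} = n - 2 := by
    rw [Fintype.card_subtype]
    have he : Finset.filter (fun x : Fin n => x ≠ a ∧ x ≠ b) Finset.univ
        = Finset.univ \ {a, b} := by
      ext x; simp [not_or, and_comm]
    rw [he, Finset.card_sdiff_of_subset (by simp)]
    simp [Finset.card_insert_of_notMem, hab]
  -- map each such permutation to an equiv of the complements
  have key : Fintype.card {f : Equiv.Perm (Fin n) // f u = a ∧ f v = b} ≤
      Fintype.card ({x : Fin n // x ≠ u ∧ x ≠ v} ≃ {x : Fin n // x ≠ a ∧ x ≠ b}) := by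
    apply Fintype.card_le_of_injective
      (fun fp => Equiv.ofBijective
        (fun x => (⟨fp.1 x.1, by
          constructor
          · intro hxa
            exact x.2.1 (fp.1.injective (hxa.trans fp.2.1.symm))
          · intro hxb
            exact x.2.2 (fp.1.injective (hxb.trans fp.2.2.symm))⟩ :
            {x : Fin n // x ≠ a ∧ x ≠ b}))
        (by
          rw [Fintype.bijective_iff_injective_and_card]
          refine ⟨fun x y hxy => ?_, by rw [hc1, hc2]⟩
          apply Subtype.ext
          exact fp.1.injective (congrArg Subtype.val hxy)))
    intro f g hfg
    apply Subtype.ext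
    apply Equiv.ext
    intro x
    by_cases hxu : x = u
    · rw [hxu, f.2.1, g.2.1]
    by_cases hxv : x = v
    · rw [hxv, f.2.2, g.2.2]
    have := congrFun (congrArg (fun e => e.toFun) hfg) ⟨x, hxu, hxv⟩
    simpa [Equiv.ofBijective] using congrArg Subtype.val this
  calc Fintype.card {f : Equiv.Perm (Fin n) // f u = a ∧ f v = b}
      ≤ Fintype.card ({x : Fin n // x ≠ u ∧ x ≠ v} ≃ {x : Fin n // x ≠ a ∧ x ≠ b}) := key
    _ = (n - 2).factorial := by
        rw [Fintype.card_equiv (Fintype.equivOfCardEq (hc1.trans hc2.symm)), hc1]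

/-- If `|A(D)| ⬝ |A(D')| < (q+1) n (n-1)` then there is a `q`-near-packing of
`D` and `D'`: a bijection of the vertex sets under which at most `q` arcs of
`D` are mapped onto arcs of `D'`. -/
theorem near_packing_of_card_mul_lt (n q : ℕ)
    (A A' : Finset (Fin n × Fin n)) (hA : IsDigraph A) (hA' : IsDigraph A')
    (h : A.card * A'.card < (q + 1) * n * (n - 1)) :
    ∃ f : Fin n ≃ Fin n,
      (A.filter fun p => (f p.1, f p.2) ∈ A').card ≤ q := by
  rcases Nat.lt_or_ge n 2 with hn | hn
  · -- n ≤ 1 : A is empty since arcs are irreflexive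
    refine ⟨Equiv.refl _, ?_⟩
    have hsub : ∀ x y : Fin n, x = y := by
      intro x y
      have hx := x.isLt
      have hy := y.isLt
      exact Fin.ext (by omega)
    have hAe : A = ∅ := by
      ext p
      simp only [Finset.notMem_empty, iff_false]
      intro hp
      exact hA p hp (hsub _ _)
    simp [hAe]
  · obtain ⟨m, rfl⟩ : ∃ m, n = m + 2 := ⟨n - 2, by omega⟩
    by_contra hcon
    push_neg at hcon
    have hcon' : ∀ f : Equiv.Perm (Fin (m + 2)), q + 1 ≤
        (A.filter fun p => (f p.1, f p.2) ∈ A').card := fun f => hcon f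
    have key : (q + 1) * (m + 2).factorial ≤ A.card * A'.card * m.factorial := by
      calc (q + 1) * (m + 2).factorial
          = ∑ _f : Equiv.Perm (Fin (m + 2)), (q + 1) := by
            rw [Finset.sum_const, smul_eq_mul, Finset.card_univ, Fintype.card_perm,
              Fintype.card_fin, mul_comm]
        _ ≤ ∑ f : Equiv.Perm (Fin (m + 2)),
              (A.filter fun p => (f p.1, f p.2) ∈ A').card :=
            Finset.sum_le_sum fun f _ => hcon' f
        _ = ∑ f : Equiv.Perm (Fin (m + 2)), ∑ p ∈ A, ∑ p' ∈ A',
              if (f p.1, f p.2) = p' then 1 else 0 := by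
            refine Finset.sum_congr rfl fun f _ => ?_
            rw [Finset.card_filter]
            refine Finset.sum_congr rfl fun p _ => ?_
            rw [Finset.sum_ite_eq]
        _ = ∑ p ∈ A, ∑ p' ∈ A',
              (Finset.univ.filter fun f : Equiv.Perm (Fin (m + 2)) =>
                (f p.1, f p.2) = p').card := by
            rw [Finset.sum_comm]
            refine Finset.sum_congr rfl fun p _ => ?_
            rw [Finset.sum_comm]
            refine Finset.sum_congr rfl fun p' _ => ?_
            rw [Finset.card_filter]
        _ ≤ ∑ p ∈ A, ∑ p' ∈ A', m.factorial := by
            refine Finset.sum_le_sum fun p hp => Finset.sum_le_sum fun p' hp' => ?_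
            have := card_perm_two_point_le (m + 2) p.1 p.2 p'.1 p'.2 (hA p hp) (hA' p' hp')
            simpa [Prod.ext_iff] using this
        _ = A.card * A'.card * m.factorial := by
            simp [Finset.sum_const, smul_eq_mul, mul_assoc]
    have hlt : A.card * A'.card * m.factorial
        < (q + 1) * (m + 2) * (m + 2 - 1) * m.factorial :=
      (Nat.mul_lt_mul_right (Nat.factorial_pos m)).mpr h
    have heq : (q + 1) * (m + 2) * (m + 2 - 1) * m.factorial
        = (q + 1) * (m + 2).factorial := by
      have h1 : m + 2 - 1 = m + 1 := rfl
      rw [h1, Nat.factorial_succ, Nat.factorial_succ]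
      ring
    omega
end

section
/- Let D and D' be digraphs on n vertices. If |A(D)| + |A(D')| ≤ 2n − 2, then D and D' pack. -/
/-!
Count collisions over all `n!` bijections. A bijection sends a fixed arc `ab` of `D` onto a fixed
arc `xy` of `D'` only if `a ↦ x` and `b ↦ y`, which happens for at most `(n-2)!` bijections; so
at most `|A(D)| |A(D')| (n-2)!` bijections fail to be packings. By AM–GM,
`|A(D)| |A(D')| ≤ (n-1)² < n (n-1)`, which leaves a bijection that is a packing.
-/

open Finset Equiv Fintype Nat

section Counting

variable {α : Type*} [DecidableEq α]

theorem exists_perm_apply_pair {a b x y : α} (hab : a ≠ b) (hxy : x ≠ y) :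
    ∃ σ : Perm α, σ a = x ∧ σ b = y := by
  have hbx : swap a x b ≠ x := by
    conv_rhs => rw [← swap_apply_left a x]
    exact (swap a x).injective.ne hab.symm
  refine ⟨swap (swap a x b) y * swap a x, ?_, ?_⟩
  · rw [Perm.mul_apply, swap_apply_left, swap_apply_of_ne_of_ne hbx.symm hxy]
  · rw [Perm.mul_apply, swap_apply_left]

variable [Fintype α]

theorem card_perm_fix_pair {a b : α} (hab : a ≠ b) :
    #{g : Perm α | g a = a ∧ g b = b} = (card α - 2)! := by
  let p : α → Prop := fun c => c ≠ a ∧ c ≠ b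
  have hfix : ∀ g : Perm α, (g a = a ∧ g b = b) ↔ ∀ c, ¬p c → g c = c := by
    intro g
    simp only [p, not_and_or, not_ne_iff]
    constructor
    · rintro ⟨ha, hb⟩ c (rfl | rfl) <;> assumption
    · intro h
      exact ⟨h a (Or.inl rfl), h b (Or.inr rfl)⟩
  have hp : card {c // p c} = card α - 2 := by
    have : ({c | p c} : Finset α) = {a, b}ᶜ := by
      ext c
      simp [p]
    rw [Fintype.card_subtype, this, card_compl, card_pair hab]
  calc #{g : Perm α | g a = a ∧ g b = b}
      = card {g : Perm α // ∀ c, ¬p c → g c = c} := by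
        rw [← Fintype.card_subtype]
        exact Fintype.card_congr (Equiv.subtypeEquivRight hfix)
    _ = card (Perm {c // p c}) := (Fintype.card_congr (Perm.subtypeEquivSubtypePerm p)).symm
    _ = (card α - 2)! := by rw [Fintype.card_perm, hp]

theorem card_perm_apply_pair_le {a b : α} (hab : a ≠ b) (x y : α) :
    #{f : Perm α | f a = x ∧ f b = y} ≤ (card α - 2)! := by
  rcases eq_or_ne x y with rfl | hxy
  · have : ({f : Perm α | f a = x ∧ f b = x} : Finset _) = ∅ :=
      filter_eq_empty_iff.mpr fun f _ ⟨ha, hb⟩ => hab (f.injective (ha.trans hb.symm))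
    simp [this]
  obtain ⟨σ, hσa, hσb⟩ := exists_perm_apply_pair hab hxy
  subst hσa hσb
  rw [← card_perm_fix_pair hab]
  refine (card_bij' (fun f _ => σ⁻¹ * f) (fun g _ => σ * g) ?_ ?_ ?_ ?_).le <;>
    simp +contextual

theorem sum_card_collisions_le (A A' : Finset (α × α)) (hA : ∀ p ∈ A, p.1 ≠ p.2) :
    ∑ f : Perm α, #{p ∈ A | (f p.1, f p.2) ∈ A'} ≤ #A * #A' * (card α - 2)! := by
  have hfiber : ∀ p ∈ A, #{f : Perm α | (f p.1, f p.2) ∈ A'} ≤ (card α - 2)! * #A' := by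
    intro p hp
    refine card_le_mul_card_image_of_maps_to (fun f hf => (mem_filter.mp hf).2) _ fun q _ => ?_
    refine (card_le_card fun f hf => ?_).trans (card_perm_apply_pair_le (hA p hp) q.1 q.2)
    simp only [mem_filter, Prod.ext_iff] at hf ⊢
    exact ⟨mem_univ f, hf.2⟩
  calc ∑ f : Perm α, #{p ∈ A | (f p.1, f p.2) ∈ A'}
      = ∑ p ∈ A, #{f : Perm α | (f p.1, f p.2) ∈ A'} := by
        simp only [card_filter]
        exact sum_comm
    _ ≤ ∑ _p ∈ A, (card α - 2)! * #A' := sum_le_sum hfiber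
    _ = #A * #A' * (card α - 2)! := by rw [sum_const, smul_eq_mul]; ring

theorem exists_perm_forall_notMem_of_lt (A A' : Finset (α × α)) (hA : ∀ p ∈ A, p.1 ≠ p.2)
    (hlt : #A * #A' * (card α - 2)! < (card α)!) :
    ∃ f : Perm α, ∀ p ∈ A, (f p.1, f p.2) ∉ A' := by
  by_contra! hcollide
  have hall : (card α)! ≤ ∑ f : Perm α, #{p ∈ A | (f p.1, f p.2) ∈ A'} := by
    rw [← Fintype.card_perm, ← Finset.card_univ, card_eq_sum_ones]
    refine sum_le_sum fun f _ => card_pos.mpr ?_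
    obtain ⟨p, hp, hfp⟩ := hcollide f
    exact ⟨p, mem_filter.mpr ⟨hp, hfp⟩⟩
  exact (hall.trans (sum_card_collisions_le A A' hA)).not_gt hlt

end Counting

theorem mul_mul_factorial_sub_two_lt_factorial {a b n : ℕ} (h : a + b ≤ 2 * n - 2) :
    a * b * (n - 2)! < n ! := by
  obtain hn | ⟨k, rfl⟩ : n < 2 ∨ ∃ k, n = k + 2 :=
    (lt_or_ge n 2).imp_right fun hn => ⟨n - 2, by omega⟩
  · have ha : a = 0 := by omega
    simp [ha, factorial_pos]
  · have hab : a * b ≤ (k + 1) * (k + 1) := by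
      have hsum : a + b ≤ 2 * (k + 1) := by omega
      zify at hsum ⊢
      nlinarith [sq_nonneg ((a : ℤ) - b)]
    rw [add_tsub_cancel_right, factorial_succ, factorial_succ, ← mul_assoc]
    exact Nat.mul_lt_mul_of_pos_right (by nlinarith) (factorial_pos k)

theorem packs_of_card_add_card_le_general (n : ℕ)
    (A A' : Finset (Fin n × Fin n)) (hA : IsDigraph A)
    (h : A.card + A'.card ≤ 2 * n - 2) :
    Packs A A' :=
  exists_perm_forall_notMem_of_lt A A' hA (by
    simpa only [Fintype.card_fin] using mul_mul_factorial_sub_two_lt_factorial h)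

/-- Two digraphs on `n` vertices with at most `2n - 2` arcs in total pack. -/
theorem packs_of_card_add_card_le (n : ℕ)
    (A A' : Finset (Fin n × Fin n)) (hA : IsDigraph A) (hA' : IsDigraph A')
    (h : A.card + A'.card ≤ 2 * n - 2) :
    Packs A A' :=
  packs_of_card_add_card_le_general n A A' hA h
end
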